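/- arXiv:2601.15254 — 4 statements merged into one kernel-verified Lean document; each statement's English description precedes it below -/
import Mathlib

section
/- Under Assumption 1, the causal coefficient solves the unpaired moment equation in the limit of many instruments: the limit Q_Y := lim_{m→∞} m·Cov(Ĩ,X̃)ᵀ Cov(I,Y) exists and equals Q β*, where Q := lim_{m→∞} m·Cov(Ĩ,X̃)ᵀ Cov(Ĩ,X̃); consequently β* belongs to the set S_∞ := {β ∈ ℝ^d : Qβ = Q_Y}. -/
open MeasureTheory ProbabilityTheory Filter Matrix
open scoped Topology NNReal ENNReal

noncomputable section

/-- Cross-covariance matrix of two centered random vectors (equal to `E[U Vᵀ]`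
for centered `U, V`). -/
def covMat {Ω : Type*} [MeasurableSpace Ω] (μ : Measure Ω) {ι κ : Type*}
    [Fintype ι] [Fintype κ] (U : Ω → ι → ℝ) (V : Ω → κ → ℝ) : Matrix ι κ ℝ :=
  Matrix.of fun i j => ∫ ω, U ω i * V ω j ∂μ

/-- Cross-covariance vector of a centered random vector and a centered
random variable. -/
def covVec {Ω : Type*} [MeasurableSpace Ω] (μ : Measure Ω) {ι : Type*}
    [Fintype ι] (U : Ω → ι → ℝ) (Y : Ω → ℝ) : ι → ℝ :=
  fun i => ∫ ω, U ω i * Y ω ∂μ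

/-- Variance (covariance) matrix of a random vector. -/
def varMat {Ω : Type*} [MeasurableSpace Ω] (μ : Measure Ω) {ι : Type*} [Fintype ι]
    (Z : Ω → ι → ℝ) : Matrix ι ι ℝ :=
  Matrix.of fun i j =>
    ∫ ω, Z ω i * Z ω j ∂μ - (∫ ω, Z ω i ∂μ) * (∫ ω, Z ω j ∂μ)

/-- Euclidean (ℓ2) norm of a finite-dimensional real vector. -/
def norm2 {ι : Type*} [Fintype ι] (v : ι → ℝ) : ℝ := Real.sqrt (∑ i, v i ^ 2)

/-- ℓ0 "norm": number of nonzero entries. -/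
def sparsity {ι : Type*} [Fintype ι] (v : ι → ℝ) : ℕ :=
  (Finset.univ.filter fun i => v i ≠ 0).card

/-- ℓ2 → ℓ2 operator norm of a real matrix. -/
def opNorm {ι κ : Type*} [Fintype ι] [Fintype κ] (A : Matrix ι κ ℝ) : ℝ :=
  sSup {y : ℝ | ∃ x : κ → ℝ, norm2 x ≤ 1 ∧ y = norm2 (A *ᵥ x)}


/-!
Exogeneity `E[ε | I] = 0` makes `ε` orthogonal to every coordinate of `I`, so the model
`Y = Xᵀβ* + ε` gives `Cov(I, Y) = Cov(I, X) β*`. By Assumption 1 (i) the sequence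
`m • Cov(Ĩ, X̃)ᵀ Cov(I, Y)` is then `(m • Cov(Ĩ, X̃)ᵀ Cov(Ĩ, X̃)) β*`, which tends to `Q β*`.
-/

section Orthogonality

variable {Ω : Type*} {m m₀ : MeasurableSpace Ω} {μ : Measure Ω}

theorem integral_mul_eq_zero_of_condExp_eq_zero (hm : m ≤ m₀) [SigmaFinite (μ.trim hm)]
    {f g : Ω → ℝ} (hf : StronglyMeasurable[m] f) (hfg : Integrable (f * g) μ)
    (hg : Integrable g μ) (hcond : μ[g | m] =ᵐ[μ] 0) :
    ∫ ω, f ω * g ω ∂μ = 0 := by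
  have hpull : μ[f * g | m] =ᵐ[μ] 0 := by
    filter_upwards [condExp_mul_of_stronglyMeasurable_left hf hfg hg, hcond] with ω hω h0
    simp [hω, h0]
  calc ∫ ω, f ω * g ω ∂μ = ∫ ω, (μ[f * g | m]) ω ∂μ := (integral_condExp hm).symm
    _ = 0 := by rw [integral_congr_ae hpull]; simp

end Orthogonality

section Covariance

variable {Ω : Type*} [MeasurableSpace Ω] {μ : Measure Ω} {ι κ : Type*} [Fintype ι] [Fintype κ]

theorem covVec_eq_zero_of_condExp_eq_zero [IsFiniteMeasure μ] {U : Ω → ι → ℝ} {ε : Ω → ℝ}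
    (hU : Measurable U) (hU2 : ∀ i, MemLp (fun ω => U ω i) 2 μ) (hε2 : MemLp ε 2 μ)
    (hexo : μ[ε | MeasurableSpace.comap U inferInstance] =ᵐ[μ] 0) :
    covVec μ U ε = 0 := by
  funext i
  have hUi : StronglyMeasurable[MeasurableSpace.comap U inferInstance] fun ω => U ω i :=
    ((measurable_pi_apply i).comp (comap_measurable U)).stronglyMeasurable
  exact integral_mul_eq_zero_of_condExp_eq_zero hU.comap_le hUi ((hU2 i).integrable_mul hε2)
    (hε2.integrable one_le_two) hexo

theorem covVec_eq_covMat_mulVec_add_covVec {U : Ω → ι → ℝ} {X : Ω → κ → ℝ} {Y ε : Ω → ℝ}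
    {β : κ → ℝ} (hY : ∀ ω, Y ω = (∑ j, X ω j * β j) + ε ω)
    (hUX : ∀ i j, Integrable (fun ω => U ω i * X ω j) μ)
    (hUε : ∀ i, Integrable (fun ω => U ω i * ε ω) μ) :
    covVec μ U Y = covMat μ U X *ᵥ β + covVec μ U ε := by
  funext i
  have hterm : ∀ j, Integrable (fun ω => U ω i * X ω j * β j) μ := fun j =>
    (hUX i j).mul_const (β j)
  have hexpand : (fun ω => U ω i * Y ω) = fun ω => (∑ j, U ω i * X ω j * β j) + U ω i * ε ω := by
    funext ω
    rw [hY, mul_add, Finset.mul_sum]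
    simp only [mul_assoc]
  simp only [covVec, covMat, Pi.add_apply, mulVec, dotProduct, of_apply]
  rw [hexpand, integral_add (integrable_finsetSum _ fun j _ => hterm j) (hUε i),
    integral_finsetSum _ fun j _ => hterm j]
  simp only [integral_mul_const]

end Covariance

theorem stmt_0_general
    (d : ℕ) (βstar : Fin d → ℝ)
    (Ω : ℕ → Type) [mΩ : ∀ m, MeasurableSpace (Ω m)]
    (μ : ∀ m, Measure (Ω m)) (hprob : ∀ m, IsProbabilityMeasure (μ m))
    (I : ∀ m, Ω m → Fin m → ℝ) (X : ∀ m, Ω m → Fin d → ℝ)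
    (Y : ∀ m, Ω m → ℝ) (ε : ∀ m, Ω m → ℝ)
    (It : ∀ m, Ω m → Fin m → ℝ) (Xt : ∀ m, Ω m → Fin d → ℝ)
    -- measurability and finite second moments
    (hImeas : ∀ m, Measurable (I m))
    (hI2 : ∀ m i, MemLp (fun ω => I m ω i) 2 (μ m))
    (hX2 : ∀ m j, MemLp (fun ω => X m ω j) 2 (μ m))
    (hε2 : ∀ m, MemLp (ε m) 2 (μ m))
    -- structural model Y = Xᵀβ* + ε
    (hmodel : ∀ m ω, Y m ω = (∑ j, X m ω j * βstar j) + ε m ω)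
    -- Assumption 1 (i): Cov(Ĩ,X̃) = Cov(I,X)
    (hcov : ∀ m, covMat (μ m) (It m) (Xt m) = covMat (μ m) (I m) (X m))
    -- Assumption 1 (ii): E[ε | I] = 0
    (hexo : ∀ m, (μ m)[ε m | MeasurableSpace.comap (I m) inferInstance] =ᵐ[μ m] 0)
    -- the limit Q is assumed to exist
    (Q : Matrix (Fin d) (Fin d) ℝ)
    (hQ : Tendsto
      (fun (m : ℕ) => (m : ℝ) • ((covMat (μ m) (It m) (Xt m))ᵀ * covMat (μ m) (It m) (Xt m)))
      atTop (𝓝 Q)) :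
    ∃ QY : Fin d → ℝ,
      Tendsto
        (fun (m : ℕ) => (m : ℝ) • ((covMat (μ m) (It m) (Xt m))ᵀ *ᵥ covVec (μ m) (I m) (Y m)))
        atTop (𝓝 QY)
      ∧ QY = Q *ᵥ βstar
      ∧ βstar ∈ {β : Fin d → ℝ | Q *ᵥ β = QY} := by
  have hcovY : ∀ m, covVec (μ m) (I m) (Y m) = covMat (μ m) (I m) (X m) *ᵥ βstar := fun m => by
    rw [covVec_eq_covMat_mulVec_add_covVec (hmodel m)
        (fun i j => (hI2 m i).integrable_mul (hX2 m j))
        (fun i => (hI2 m i).integrable_mul (hε2 m)),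
      covVec_eq_zero_of_condExp_eq_zero (hImeas m) (hI2 m) (hε2 m) (hexo m), add_zero]
  have hseq : (fun m : ℕ => (m : ℝ) • ((covMat (μ m) (It m) (Xt m))ᵀ *ᵥ covVec (μ m) (I m) (Y m)))
      = fun m : ℕ =>
        ((m : ℝ) • ((covMat (μ m) (It m) (Xt m))ᵀ * covMat (μ m) (It m) (Xt m))) *ᵥ βstar := by
    funext m
    rw [hcovY, ← hcov, mulVec_mulVec, smul_mulVec]
  refine ⟨Q *ᵥ βstar, ?_, rfl, rfl⟩
  rw [hseq]
  exact ((continuous_id.matrix_mulVec continuous_const).tendsto Q).comp hQ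

/-- Under Assumption 1, in the high-dimensional instrument limit the
limit `Q_Y := lim_m m · Cov(Ĩ,X̃)ᵀ Cov(I,Y)` exists, equals `Q β*`, and consequently
`β*` belongs to `S_∞ = {β : Q β = Q_Y}`. -/
theorem stmt_0
    (d : ℕ) (βstar : Fin d → ℝ)
    (Ω : ℕ → Type) [mΩ : ∀ m, MeasurableSpace (Ω m)]
    (μ : ∀ m, Measure (Ω m)) (hprob : ∀ m, IsProbabilityMeasure (μ m))
    (I : ∀ m, Ω m → Fin m → ℝ) (X : ∀ m, Ω m → Fin d → ℝ)
    (Y : ∀ m, Ω m → ℝ) (ε : ∀ m, Ω m → ℝ)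
    (It : ∀ m, Ω m → Fin m → ℝ) (Xt : ∀ m, Ω m → Fin d → ℝ)
    -- measurability and finite second moments
    (hImeas : ∀ m, Measurable (I m))
    (hI2 : ∀ m i, MemLp (fun ω => I m ω i) 2 (μ m))
    (hX2 : ∀ m j, MemLp (fun ω => X m ω j) 2 (μ m))
    (hIt2 : ∀ m i, MemLp (fun ω => It m ω i) 2 (μ m))
    (hXt2 : ∀ m j, MemLp (fun ω => Xt m ω j) 2 (μ m))
    (hY2 : ∀ m, MemLp (Y m) 2 (μ m))
    (hε2 : ∀ m, MemLp (ε m) 2 (μ m))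
    -- all variables are centered
    (hIc : ∀ m i, ∫ ω, I m ω i ∂(μ m) = 0)
    (hXc : ∀ m j, ∫ ω, X m ω j ∂(μ m) = 0)
    (hItc : ∀ m i, ∫ ω, It m ω i ∂(μ m) = 0)
    (hXtc : ∀ m j, ∫ ω, Xt m ω j ∂(μ m) = 0)
    (hYc : ∀ m, ∫ ω, Y m ω ∂(μ m) = 0)
    -- structural model Y = Xᵀβ* + ε
    (hmodel : ∀ m ω, Y m ω = (∑ j, X m ω j * βstar j) + ε m ω)
    -- Assumption 1 (i): Cov(Ĩ,X̃) = Cov(I,X)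
    (hcov : ∀ m, covMat (μ m) (It m) (Xt m) = covMat (μ m) (I m) (X m))
    -- Assumption 1 (ii): E[ε | I] = 0
    (hexo : ∀ m, (μ m)[ε m | MeasurableSpace.comap (I m) inferInstance] =ᵐ[μ m] 0)
    -- the limit Q is assumed to exist
    (Q : Matrix (Fin d) (Fin d) ℝ)
    (hQ : Tendsto
      (fun (m : ℕ) => (m : ℝ) • ((covMat (μ m) (It m) (Xt m))ᵀ * covMat (μ m) (It m) (Xt m)))
      atTop (𝓝 Q)) :
    ∃ QY : Fin d → ℝ,
      Tendsto
        (fun (m : ℕ) => (m : ℝ) • ((covMat (μ m) (It m) (Xt m))ᵀ *ᵥ covVec (μ m) (I m) (Y m)))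
        atTop (𝓝 QY)
      ∧ QY = Q *ᵥ βstar
      ∧ βstar ∈ {β : Fin d → ℝ | Q *ᵥ β = QY} :=
  stmt_0_general d βstar Ω (mΩ := mΩ) μ hprob I X Y ε It Xt hImeas hI2 hX2 hε2 hmodel hcov hexo Q hQ
end
end

section
/- (Identifiability for high-dimensional instrument, sparse β*.) Under Assumption 1 and assuming that Q := lim_{m→∞} m·Cov(Ĩ,X̃)ᵀ Cov(Ĩ,X̃) ∈ ℝ^{d×d} and Q_Y = Qβ* exist, fixing s* ≤ d, the following are equivalent: (i) for every β* ∈ ℝ^d with ‖β*‖₀ ≤ s*, the set of sparsest solutions S_{0,∞} := argmin_{β∈S_∞} ‖β‖₀ equals the singleton {β*}; (ii) ker(Q) ∩ Σ_{2s*} = {0}. -/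
open MeasureTheory ProbabilityTheory Filter Matrix
open scoped Topology NNReal ENNReal

noncomputable section

/-!
Write `Σ_s` for the `s`-sparse vectors. Two `s`-sparse vectors with the same image under `Q` differ
by an element of `ker Q ∩ Σ_{2s}`, so if this intersection is trivial, every `s`-sparse `b` is the
only solution of `Q β = Q b` that is at most as sparse as `b`. Conversely, every `v ∈ Σ_{2s}` is a
difference `a - b` of two `s`-sparse vectors; when `Q v = 0` the two share their set of sparsest
solutions, which is then both `{a}` and `{b}`.
-/

section Sparsity

variable {ι : Type*} [Fintype ι]

lemma sparsity_le_card_of_forall_ne_zero_mem {v : ι → ℝ} {T : Finset ι}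
    (h : ∀ i, v i ≠ 0 → i ∈ T) : sparsity v ≤ T.card :=
  Finset.card_le_card fun i hi => h i (Finset.mem_filter.mp hi).2

lemma sparsity_sub_le (v w : ι → ℝ) : sparsity (v - w) ≤ sparsity v + sparsity w := by
  classical
  refine (sparsity_le_card_of_forall_ne_zero_mem fun i hi => ?_).trans (Finset.card_union_le _ _)
  by_contra hnot
  simp_all

lemma exists_sub_eq_of_sparsity_le_add {v : ι → ℝ} {s t : ℕ} (hv : sparsity v ≤ s + t) :
    ∃ a b : ι → ℝ, sparsity a ≤ s ∧ sparsity b ≤ t ∧ a - b = v := by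
  classical
  set S := Finset.univ.filter fun i => v i ≠ 0
  obtain ⟨T, hTS, hT⟩ := Finset.exists_subset_card_eq (s := S) (min_le_right s S.card)
  let a : ι → ℝ := fun i => if i ∈ T then v i else 0
  refine ⟨a, a - v, ?_, ?_, sub_sub_cancel a v⟩
  · refine (sparsity_le_card_of_forall_ne_zero_mem (T := T) fun i hi => ?_).trans (by omega)
    by_contra hiT
    simp [a, hiT] at hi
  · have hcard : (S \ T).card ≤ t := by
      change S.card ≤ s + t at hv
      rw [Finset.card_sdiff_of_subset hTS, hT]
      omega
    refine (sparsity_le_card_of_forall_ne_zero_mem fun i hi => ?_).trans hcard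
    by_cases hiT : i ∈ T <;> simp_all [a, S]

end Sparsity

section SparsestSolutions

variable {ι κ : Type*} [Fintype ι]

/-- The set `S_{0,∞}` of sparsest solutions `β` of `Q β = Q b`. -/
def sparsestSolutions (Q : Matrix κ ι ℝ) (b : ι → ℝ) : Set (ι → ℝ) :=
  {β | Q *ᵥ β = Q *ᵥ b ∧ ∀ γ : ι → ℝ, Q *ᵥ γ = Q *ᵥ b → sparsity β ≤ sparsity γ}

lemma sparsestSolutions_congr {Q : Matrix κ ι ℝ} {a b : ι → ℝ} (h : Q *ᵥ a = Q *ᵥ b) :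
    sparsestSolutions Q a = sparsestSolutions Q b := by
  simp only [sparsestSolutions, h]

lemma eq_of_mulVec_eq_of_sparsity_le {Q : Matrix κ ι ℝ} {s : ℕ}
    (hker : ∀ v : ι → ℝ, Q *ᵥ v = 0 → sparsity v ≤ 2 * s → v = 0) {a b : ι → ℝ}
    (ha : sparsity a ≤ s) (hb : sparsity b ≤ s) (hab : Q *ᵥ a = Q *ᵥ b) : a = b := by
  refine sub_eq_zero.mp (hker _ ?_ ?_)
  · rw [Matrix.mulVec_sub, hab, sub_self]
  · exact (sparsity_sub_le a b).trans (by omega)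

lemma sparsestSolutions_eq_singleton {Q : Matrix κ ι ℝ} {s : ℕ}
    (hker : ∀ v : ι → ℝ, Q *ᵥ v = 0 → sparsity v ≤ 2 * s → v = 0) {b : ι → ℝ}
    (hb : sparsity b ≤ s) : sparsestSolutions Q b = {b} := by
  ext β
  constructor
  · rintro ⟨hβ, hmin⟩
    exact eq_of_mulVec_eq_of_sparsity_le hker ((hmin b rfl).trans hb) hb hβ
  · rintro rfl
    refine ⟨rfl, fun γ hγ => ?_⟩
    by_contra! hγs
    rw [eq_of_mulVec_eq_of_sparsity_le hker hb (hγs.le.trans hb) hγ.symm] at hγs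
    exact lt_irrefl _ hγs

lemma eq_zero_of_sparsestSolutions_eq_singleton {Q : Matrix κ ι ℝ} {s : ℕ}
    (hident : ∀ b : ι → ℝ, sparsity b ≤ s → sparsestSolutions Q b = {b}) {v : ι → ℝ}
    (hQv : Q *ᵥ v = 0) (hv : sparsity v ≤ 2 * s) : v = 0 := by
  obtain ⟨a, b, ha, hb, rfl⟩ := exists_sub_eq_of_sparsity_le_add (hv.trans_eq (two_mul s))
  have hab : Q *ᵥ a = Q *ᵥ b := sub_eq_zero.mp (by rwa [← Matrix.mulVec_sub])
  have hsingle : ({a} : Set (ι → ℝ)) = {b} := by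
    rw [← hident a ha, ← hident b hb, sparsestSolutions_congr hab]
  rw [Set.singleton_eq_singleton_iff.mp hsingle, sub_self]

theorem sparsestSolutions_eq_singleton_iff (Q : Matrix κ ι ℝ) (s : ℕ) :
    (∀ b : ι → ℝ, sparsity b ≤ s → sparsestSolutions Q b = {b}) ↔
      ∀ v : ι → ℝ, Q *ᵥ v = 0 → sparsity v ≤ 2 * s → v = 0 :=
  ⟨fun hident _ => eq_zero_of_sparsestSolutions_eq_singleton hident,
    fun hker _ => sparsestSolutions_eq_singleton hker⟩

end SparsestSolutions

theorem stmt_4_general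
    (d sstar : ℕ)
    (Q : Matrix (Fin d) (Fin d) ℝ) :
    -- (i): identifiability via the sparsest solution, for every s*-sparse target
    (∀ b : Fin d → ℝ, sparsity b ≤ sstar →
        {β : Fin d → ℝ |
            Q *ᵥ β = Q *ᵥ b ∧
            ∀ γ : Fin d → ℝ, Q *ᵥ γ = Q *ᵥ b → sparsity β ≤ sparsity γ}
          = {b})
    -- (ii): restricted nullspace condition
    ↔ (∀ v : Fin d → ℝ, Q *ᵥ v = 0 → sparsity v ≤ 2 * sstar → v = 0) :=
  sparsestSolutions_eq_singleton_iff Q sstar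

/-- Identifiability for high-dimensional instrument and sparse `β*`:
under Assumption 1 and existence of `Q = lim_m m Cov(Ĩ,X̃)ᵀCov(Ĩ,X̃)` (with
`Q_Y = Qβ*`), fixing `s* ≤ d`, identifiability of every `s*`-sparse `β*` via the
sparsest solution of `Qβ = Qβ*` is equivalent to `ker(Q) ∩ Σ_{2s*} = {0}`. -/
theorem stmt_4
    (d sstar : ℕ) (hs : sstar ≤ d) (βstar : Fin d → ℝ)
    (Ω : ℕ → Type) [mΩ : ∀ m, MeasurableSpace (Ω m)]
    (μ : ∀ m, Measure (Ω m)) (hprob : ∀ m, IsProbabilityMeasure (μ m))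
    (I : ∀ m, Ω m → Fin m → ℝ) (X : ∀ m, Ω m → Fin d → ℝ)
    (Y : ∀ m, Ω m → ℝ) (ε : ∀ m, Ω m → ℝ)
    (It : ∀ m, Ω m → Fin m → ℝ) (Xt : ∀ m, Ω m → Fin d → ℝ)
    -- measurability and finite second moments
    (hImeas : ∀ m, Measurable (I m))
    (hI2 : ∀ m i, MemLp (fun ω => I m ω i) 2 (μ m))
    (hX2 : ∀ m j, MemLp (fun ω => X m ω j) 2 (μ m))
    (hIt2 : ∀ m i, MemLp (fun ω => It m ω i) 2 (μ m))
    (hXt2 : ∀ m j, MemLp (fun ω => Xt m ω j) 2 (μ m))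
    (hY2 : ∀ m, MemLp (Y m) 2 (μ m))
    (hε2 : ∀ m, MemLp (ε m) 2 (μ m))
    -- all variables are centered
    (hIc : ∀ m i, ∫ ω, I m ω i ∂(μ m) = 0)
    (hXc : ∀ m j, ∫ ω, X m ω j ∂(μ m) = 0)
    (hItc : ∀ m i, ∫ ω, It m ω i ∂(μ m) = 0)
    (hXtc : ∀ m j, ∫ ω, Xt m ω j ∂(μ m) = 0)
    (hYc : ∀ m, ∫ ω, Y m ω ∂(μ m) = 0)
    -- structural model Y = Xᵀβ* + ε
    (hmodel : ∀ m ω, Y m ω = (∑ j, X m ω j * βstar j) + ε m ω)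
    -- Assumption 1 (i): Cov(Ĩ,X̃) = Cov(I,X)
    (hcov : ∀ m, covMat (μ m) (It m) (Xt m) = covMat (μ m) (I m) (X m))
    -- Assumption 1 (ii): E[ε | I] = 0
    (hexo : ∀ m, (μ m)[ε m | MeasurableSpace.comap (I m) inferInstance] =ᵐ[μ m] 0)
    -- the limit Q is assumed to exist
    (Q : Matrix (Fin d) (Fin d) ℝ)
    (hQ : Tendsto
      (fun (m : ℕ) => (m : ℝ) • ((covMat (μ m) (It m) (Xt m))ᵀ * covMat (μ m) (It m) (Xt m)))
      atTop (𝓝 Q)) :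
    -- (i): identifiability via the sparsest solution, for every s*-sparse target
    (∀ b : Fin d → ℝ, sparsity b ≤ sstar →
        {β : Fin d → ℝ |
            Q *ᵥ β = Q *ᵥ b ∧
            ∀ γ : Fin d → ℝ, Q *ᵥ γ = Q *ᵥ b → sparsity β ≤ sparsity γ}
          = {b})
    -- (ii): restricted nullspace condition
    ↔ (∀ v : Fin d → ℝ, Q *ᵥ v = 0 → sparsity v ≤ 2 * sstar → v = 0) :=
  stmt_4_general d sstar Q
end
end

section
/- (Scaled error rates, part i.) Under Assumption 4 with d ∈ ℕ and K ≥ 2 fixed and n/m → r ∈ (0,∞), ñ/m → r̃ ∈ (0,∞), write c̄ := √m·Cov(I,X), E_k := √m(Ĉov_k(Ĩ,X̃) − Cov(I,X)) for the k-th fold error, and E := √m(Ĉov(Ĩ,X̃) − Cov(I,X)) for the full-sample error. Then for each fixed k ∈ [K], ‖c̄ᵀE_k‖_op = O_p(m^{-1/2}) and ‖c̄ᵀE‖_op = O_p(m^{-1/2}); that is, for every δ > 0 there exist C' > 0 and M such that for all m ≥ M the probability that √m times the respective operator norm exceeds C' is less than δ. -/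
open MeasureTheory ProbabilityTheory Filter Matrix
open scoped Topology NNReal ENNReal

noncomputable section

/-- Empirical cross-covariance matrix `Ĉov(Ĩ,X̃)` from the first `nt` observations. -/
def covHat {Ω : Type*} {m d : ℕ} (It : ℕ → Ω → Fin m → ℝ) (Xt : ℕ → Ω → Fin d → ℝ)
    (nt : ℕ) (ω : Ω) : Matrix (Fin m) (Fin d) ℝ :=
  Matrix.of fun k l => (nt : ℝ)⁻¹ * ∑ j ∈ Finset.range nt, It j ω k * Xt j ω l

/-- Empirical cross-covariance `Ĉov(I,Y)` from the first `n` observations. -/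
def covYHat {Ω : Type*} {m : ℕ} (I : ℕ → Ω → Fin m → ℝ) (Y : ℕ → Ω → ℝ)
    (n : ℕ) (ω : Ω) : Fin m → ℝ :=
  fun k => (n : ℝ)⁻¹ * ∑ i ∈ Finset.range n, I i ω k * Y i ω

/-- Sample moment `ĝ_N(β) = (1/n) Σ I_i Y_i − ((1/ñ) Σ Ĩ_j X̃_jᵀ) β`. -/
def ghat {Ω : Type*} {m d : ℕ} (I : ℕ → Ω → Fin m → ℝ) (Y : ℕ → Ω → ℝ)
    (It : ℕ → Ω → Fin m → ℝ) (Xt : ℕ → Ω → Fin d → ℝ)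
    (n nt : ℕ) (ω : Ω) (b : Fin d → ℝ) : Fin m → ℝ :=
  fun k => covYHat I Y n ω k - (covHat It Xt nt ω *ᵥ b) k

/-- Within-fold empirical cross-covariance: fold `k` (of size `q`) consists of the
observations with indices in `[k·q, (k+1)·q)`. -/
def foldCovHat {Ω : Type*} {m d : ℕ} (It : ℕ → Ω → Fin m → ℝ) (Xt : ℕ → Ω → Fin d → ℝ)
    (q k : ℕ) (ω : Ω) : Matrix (Fin m) (Fin d) ℝ :=
  Matrix.of fun a l => (q : ℝ)⁻¹ * ∑ j ∈ Finset.Ico (k * q) ((k + 1) * q), It j ω a * Xt j ω l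

/-- Cross-fold moment matrix `C_XX = (m/(K(K−1))) Σ_{h≠k} Ĉov_h(Ĩ,X̃)ᵀ Ĉov_k(Ĩ,X̃)`. -/
def CXXmat {Ω : Type*} {m d : ℕ} (It : ℕ → Ω → Fin m → ℝ) (Xt : ℕ → Ω → Fin d → ℝ)
    (K q : ℕ) (ω : Ω) : Matrix (Fin d) (Fin d) ℝ :=
  ((m : ℝ) / ((K : ℝ) * ((K : ℝ) - 1))) •
    ∑ p ∈ (Finset.univ : Finset (Fin K × Fin K)).filter (fun p => p.1 ≠ p.2),
      (foldCovHat It Xt q (p.1 : ℕ) ω)ᵀ * foldCovHat It Xt q (p.2 : ℕ) ω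

/-- Cross moment `C_XY = m · Ĉov(Ĩ,X̃)ᵀ Ĉov(I,Y)`. -/
def CXYvec {Ω : Type*} {m d : ℕ} (I : ℕ → Ω → Fin m → ℝ) (Y : ℕ → Ω → ℝ)
    (It : ℕ → Ω → Fin m → ℝ) (Xt : ℕ → Ω → Fin d → ℝ)
    (n nt : ℕ) (ω : Ω) : Fin d → ℝ :=
  (m : ℝ) • ((covHat It Xt nt ω)ᵀ *ᵥ covYHat I Y n ω)

/-!
Write `c = Cov(Ĩ,X̃)` (which equals `Cov(I,X)`) and `Ĉ_s` for the sample cross-covariance over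
an index set `s` of size `N` (one fold, or the whole second sample). Each entry `(l, l')` of
`cᵀ(Ĉ_s - c)` is the centred sample mean of the i.i.d. scalars `wᵀ vec(Ĩ_j X̃_jᵀ)`, where `w` is
the `l`-th column of `c` placed in the block of column `l'`. Its second moment is therefore
`wᵀ V w / N ≤ ‖V‖_op ‖w‖² / N` with `V = Var(vec(Ĩ X̃ᵀ))`, and summing over the entries gives
`E‖cᵀ(Ĉ_s - c)‖_F² ≤ d ‖V‖_op tr(cᵀc) / N`. After the scaling by `m^{3/2}` this is
`d (m/N) (m‖V‖_op) tr(m cᵀc)`, which stays bounded since `m/N` tends to `K/r̃` or `1/r̃`,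
`m‖V‖_op ≤ C` and `tr(m cᵀc) → tr Q`. Markov's inequality for the squared Frobenius norm, which
dominates the squared operator norm, gives the bound in probability.
-/

open Finset

section OpNorm

open scoped Matrix.Norms.L2Operator

variable {ι κ : Type*} [Fintype ι] [Fintype κ]

lemma norm2_eq_norm_toLp (v : ι → ℝ) : norm2 v = ‖WithLp.toLp 2 v‖ := by
  simp [norm2, EuclideanSpace.norm_eq]

lemma opNorm_eq_l2_opNorm [DecidableEq κ] (A : Matrix ι κ ℝ) : opNorm A = ‖A‖ := by
  rw [Matrix.l2_opNorm_def, ← ContinuousLinearMap.sSup_unitClosedBall_eq_norm, opNorm]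
  congr 1
  ext y
  simp only [Set.mem_ofPred_eq, Set.mem_image, Metric.mem_closedBall, dist_zero_right,
    norm2_eq_norm_toLp]
  constructor
  · rintro ⟨x, hx, rfl⟩
    exact ⟨WithLp.toLp 2 x, hx, rfl⟩
  · rintro ⟨x, hx, rfl⟩
    exact ⟨x.ofLp, hx, rfl⟩

lemma opNorm_nonneg (A : Matrix ι κ ℝ) : 0 ≤ opNorm A := by
  classical
  rw [opNorm_eq_l2_opNorm]
  exact norm_nonneg A

lemma opNorm_le_sqrt_sum_sq (A : Matrix ι κ ℝ) : opNorm A ≤ √(∑ i, ∑ j, A i j ^ 2) := by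
  classical
  rw [opNorm_eq_l2_opNorm, Matrix.l2_opNorm_def]
  refine ContinuousLinearMap.opNorm_le_bound _ (Real.sqrt_nonneg _) fun x => ?_
  simp only [EuclideanSpace.norm_eq, Real.norm_eq_abs, sq_abs]
  rw [← Real.sqrt_mul' _ (sum_nonneg fun _ _ => sq_nonneg _), sum_mul]
  gcongr with i
  simpa [Matrix.mulVec, dotProduct] using sum_mul_sq_le_sq_mul_sq _ (A i) x.ofLp

lemma dotProduct_mulVec_le_opNorm_mul (V : Matrix ι ι ℝ) (w : ι → ℝ) :
    w ⬝ᵥ (V *ᵥ w) ≤ opNorm V * ∑ i, w i ^ 2 := by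
  classical
  have hw : ∑ i, w i ^ 2 = ‖WithLp.toLp 2 w‖ ^ 2 := by
    rw [← norm2_eq_norm_toLp, norm2, Real.sq_sqrt (sum_nonneg fun _ _ => sq_nonneg _)]
  calc w ⬝ᵥ (V *ᵥ w) = inner ℝ (WithLp.toLp 2 (V *ᵥ w)) (WithLp.toLp 2 w) := by
        simp [EuclideanSpace.inner_eq_star_dotProduct]
    _ ≤ ‖WithLp.toLp 2 (V *ᵥ w)‖ * ‖WithLp.toLp 2 w‖ := real_inner_le_norm _ _
    _ ≤ ‖V‖ * ‖WithLp.toLp 2 w‖ * ‖WithLp.toLp 2 w‖ := by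
        gcongr; exact V.l2_opNorm_mulVec (WithLp.toLp 2 w)
    _ = opNorm V * ∑ i, w i ^ 2 := by rw [opNorm_eq_l2_opNorm, hw]; ring

lemma sq_sqrt_mul_opNorm_smul_transpose_mul_smul_le {κ' : Type*} [Fintype κ'] {x : ℝ}
    (hx : 0 ≤ x) (A : Matrix ι κ ℝ) (B : Matrix ι κ' ℝ) :
    (√x * opNorm ((√x • A)ᵀ * (√x • B))) ^ 2 ≤ x ^ 3 * ∑ l, ∑ l', ((Aᵀ * B) l l') ^ 2 := by
  have hAB : (√x • A)ᵀ * (√x • B) = x • (Aᵀ * B) := by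
    rw [Matrix.transpose_smul, Matrix.smul_mul, Matrix.mul_smul, smul_smul, Real.mul_self_sqrt hx]
  have hle : opNorm (x • (Aᵀ * B)) ^ 2 ≤ x ^ 2 * ∑ l, ∑ l', ((Aᵀ * B) l l') ^ 2 := by
    calc opNorm (x • (Aᵀ * B)) ^ 2 ≤ √(∑ l, ∑ l', ((x • (Aᵀ * B)) l l') ^ 2) ^ 2 :=
          pow_le_pow_left₀ (opNorm_nonneg _) (opNorm_le_sqrt_sum_sq _) 2
      _ = x ^ 2 * ∑ l, ∑ l', ((Aᵀ * B) l l') ^ 2 := by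
          rw [Real.sq_sqrt (by positivity)]
          simp only [Matrix.smul_apply, smul_eq_mul, mul_pow, mul_sum]
  rw [hAB, mul_pow, Real.sq_sqrt hx]
  calc x * opNorm (x • (Aᵀ * B)) ^ 2 ≤ x * (x ^ 2 * ∑ l, ∑ l', ((Aᵀ * B) l l') ^ 2) := by gcongr
    _ = x ^ 3 * ∑ l, ∑ l', ((Aᵀ * B) l l') ^ 2 := by ring

end OpNorm

section ColWeight

variable {ι κ : Type*} [DecidableEq κ]

def colWeight (c : Matrix ι κ ℝ) (l l' : κ) : ι × κ → ℝ :=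
  fun p => if p.2 = l' then c p.1 l else 0

variable [Fintype ι] [Fintype κ]

lemma colWeight_dotProduct (c D : Matrix ι κ ℝ) (l l' : κ) :
    colWeight c l l' ⬝ᵥ (fun p => D p.1 p.2) = (cᵀ * D) l l' := by
  simp [colWeight, dotProduct, Fintype.sum_prod_type, Matrix.mul_apply]

lemma sum_colWeight_sq (c : Matrix ι κ ℝ) (l l' : κ) :
    ∑ p, colWeight c l l' p ^ 2 = ∑ a, c a l ^ 2 := by
  simp [colWeight, Fintype.sum_prod_type, ite_pow]

lemma sum_colWeight_dotProduct_mulVec_le (c : Matrix ι κ ℝ)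
    (V : Matrix (ι × κ) (ι × κ) ℝ) :
    ∑ l, ∑ l', colWeight c l l' ⬝ᵥ (V *ᵥ colWeight c l l')
      ≤ Fintype.card κ * opNorm V * (cᵀ * c).trace := by
  calc ∑ l, ∑ l', colWeight c l l' ⬝ᵥ (V *ᵥ colWeight c l l')
      ≤ ∑ l, ∑ _l' : κ, opNorm V * ∑ a, c a l ^ 2 := by
        gcongr with l _ l'
        rw [← sum_colWeight_sq c l l']
        exact dotProduct_mulVec_le_opNorm_mul V _
    _ = Fintype.card κ * opNorm V * (cᵀ * c).trace := by
        simp only [sum_const, card_univ, nsmul_eq_mul, Matrix.trace, Matrix.diag_apply,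
          Matrix.mul_apply, Matrix.transpose_apply, ← sq, mul_sum]
        exact sum_congr rfl fun l _ => sum_congr rfl fun a _ => by ring

end ColWeight

section SampleCov

variable {Ω ι κ : Type*}

def sampleCov (It : ℕ → Ω → ι → ℝ) (Xt : ℕ → Ω → κ → ℝ) (s : Finset ℕ) (ω : Ω) :
    Matrix ι κ ℝ :=
  Matrix.of fun a b => (#s : ℝ)⁻¹ * ∑ j ∈ s, It j ω a * Xt j ω b

lemma covHat_eq_sampleCov {m d : ℕ} (It : ℕ → Ω → Fin m → ℝ) (Xt : ℕ → Ω → Fin d → ℝ)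
    (n : ℕ) (ω : Ω) : covHat It Xt n ω = sampleCov It Xt (range n) ω := by
  simp [covHat, sampleCov]

lemma foldCovHat_eq_sampleCov {m d : ℕ} (It : ℕ → Ω → Fin m → ℝ) (Xt : ℕ → Ω → Fin d → ℝ)
    (q k : ℕ) (ω : Ω) :
    foldCovHat It Xt q k ω = sampleCov It Xt (Ico (k * q) ((k + 1) * q)) ω := by
  simp [foldCovHat, sampleCov, add_mul]

end SampleCov

section Moments

variable {Ω : Type*} [MeasurableSpace Ω] {μ : Measure Ω}

lemma memLp_two_mul_of_memLp_four {f g : Ω → ℝ} (hf : MemLp f 4 μ) (hg : MemLp g 4 μ) :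
    MemLp (fun ω => f ω * g ω) 2 μ :=
  have : ENNReal.HolderTriple 4 4 2 := ⟨by
    rw [← two_mul, show (4 : ℝ≥0∞) = 2 * 2 by norm_num, ENNReal.mul_inv (by simp) (by simp),
      ← mul_assoc, ENNReal.mul_inv_cancel (by simp) (by simp), one_mul]⟩
  hg.mul' hf

lemma integral_sq_sampleMean_sub [IsProbabilityMeasure μ] {W : ℕ → Ω → ℝ}
    (hW : ∀ j, MemLp (W j) 2 μ) (hind : Pairwise fun i j => IndepFun (W i) (W j) μ)
    (hid : ∀ j, IdentDistrib (W j) (W 0) μ μ) {s : Finset ℕ} (hs : s.Nonempty) :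
    ∫ ω, ((#s : ℝ)⁻¹ * ∑ j ∈ s, W j ω - μ[W 0]) ^ 2 ∂μ = Var[W 0; μ] / #s := by
  have hcard : (#s : ℝ) ≠ 0 := by exact_mod_cast hs.card_pos.ne'
  have hsum : MemLp (∑ j ∈ s, W j) 2 μ := memLp_finsetSum' s fun j _ => hW j
  have hmean : μ[fun ω => (#s : ℝ)⁻¹ * ∑ j ∈ s, W j ω] = μ[W 0] := by
    rw [integral_const_mul, integral_finsetSum s fun j _ => (hW j).integrable one_le_two,
      sum_congr rfl fun j _ => (hid j).integral_eq, sum_const, nsmul_eq_mul,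
      inv_mul_cancel_left₀ hcard]
  have hvar : Var[∑ j ∈ s, W j; μ] = #s * Var[W 0; μ] := by
    rw [IndepFun.variance_sum (fun j _ => hW j) fun i _ j _ hij => hind hij,
      sum_congr rfl fun j _ => (hid j).variance_eq, sum_const, nsmul_eq_mul]
  calc ∫ ω, ((#s : ℝ)⁻¹ * ∑ j ∈ s, W j ω - μ[W 0]) ^ 2 ∂μ
      = Var[fun ω => (#s : ℝ)⁻¹ * (∑ j ∈ s, W j) ω; μ] := by
        rw [variance_eq_integral ((hsum.const_mul _).aemeasurable)]
        simp only [Finset.sum_apply, hmean]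
    _ = Var[W 0; μ] / #s := by
        rw [variance_const_mul, hvar]
        field_simp

lemma varMat_apply_eq_covariance [IsProbabilityMeasure μ] {ι : Type*} [Fintype ι]
    {Z : Ω → ι → ℝ} (hZ : ∀ i, MemLp (fun ω => Z ω i) 2 μ) (i k : ι) :
    varMat μ Z i k = cov[fun ω => Z ω i, fun ω => Z ω k; μ] := by
  rw [covariance_eq_sub (hZ i) (hZ k)]
  rfl

lemma variance_dotProduct [IsProbabilityMeasure μ] {ι : Type*} [Fintype ι]
    {Z : Ω → ι → ℝ} (hZ : ∀ i, MemLp (fun ω => Z ω i) 2 μ) (w : ι → ℝ) :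
    Var[fun ω => w ⬝ᵥ Z ω; μ] = w ⬝ᵥ (varMat μ Z *ᵥ w) := by
  simp only [dotProduct, Matrix.mulVec, varMat_apply_eq_covariance hZ, mul_sum]
  rw [variance_fun_sum fun i => (hZ i).const_mul (w i)]
  refine sum_congr rfl fun i _ => sum_congr rfl fun k _ => ?_
  rw [covariance_const_mul_left, covariance_const_mul_right]
  ring

variable {ι κ : Type*} [Fintype ι] [Fintype κ]

lemma integral_sum_sq_transpose_mul_sampleMean_sub_le [IsProbabilityMeasure μ]
    {Z : ℕ → Ω → ι × κ → ℝ} (hZ : ∀ j p, MemLp (fun ω => Z j ω p) 2 μ)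
    (hind : iIndepFun Z μ) (hid : ∀ j, IdentDistrib (Z j) (Z 0) μ μ)
    (c : Matrix ι κ ℝ) {s : Finset ℕ} (hs : s.Nonempty) :
    let dev : Ω → Matrix ι κ ℝ := fun ω => Matrix.of fun a b =>
      (#s : ℝ)⁻¹ * ∑ j ∈ s, Z j ω (a, b) - μ[fun ω => Z 0 ω (a, b)]
    Integrable (fun ω => ∑ l, ∑ l', ((cᵀ * dev ω) l l') ^ 2) μ ∧
      ∫ ω, ∑ l, ∑ l', ((cᵀ * dev ω) l l') ^ 2 ∂μ
        ≤ Fintype.card κ * opNorm (varMat μ (Z 0)) * (cᵀ * c).trace / #s := by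
  classical
  intro dev
  set V := varMat μ (Z 0)
  have hW : ∀ w : ι × κ → ℝ, ∀ j, MemLp (fun ω => w ⬝ᵥ Z j ω) 2 μ := fun w j =>
    memLp_finsetSum _ fun p _ => (hZ j p).const_mul (w p)
  have hdot : ∀ w : ι × κ → ℝ, Measurable fun z : ι × κ → ℝ => w ⬝ᵥ z := fun w =>
    (continuous_const.dotProduct continuous_id).measurable
  have hentry : ∀ l l' ω, (cᵀ * dev ω) l l' =
      (#s : ℝ)⁻¹ * ∑ j ∈ s, colWeight c l l' ⬝ᵥ Z j ω - μ[fun ω => colWeight c l l' ⬝ᵥ Z 0 ω] := by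
    intro l l' ω
    rw [← colWeight_dotProduct]
    simp only [dev, Matrix.of_apply, dotProduct, mul_sub, sum_sub_distrib, mul_sum]
    rw [integral_finsetSum _ fun p _ => ((hZ 0 p).integrable one_le_two).const_mul _]
    simp only [integral_const_mul]
    rw [sum_comm]
    congr 1
    exact sum_congr rfl fun p _ => sum_congr rfl fun j _ => by ring
  have hint : ∀ l l', Integrable (fun ω => ((cᵀ * dev ω) l l') ^ 2) μ := fun l l' => by
    simp_rw [hentry]
    exact (((memLp_finsetSum s fun j _ => hW _ j).const_mul _).sub (memLp_const _)).integrable_sq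
  have hsq : ∀ l l', ∫ ω, ((cᵀ * dev ω) l l') ^ 2 ∂μ
      = colWeight c l l' ⬝ᵥ (V *ᵥ colWeight c l l') / #s := fun l l' => by
    simp_rw [hentry]
    refine (integral_sq_sampleMean_sub (W := fun j ω => colWeight c l l' ⬝ᵥ Z j ω) (hW _)
      (fun i j hij => (hind.comp _ fun _ => hdot _).indepFun hij)
      (fun j => (hid j).comp (hdot _)) hs).trans ?_
    rw [variance_dotProduct (hZ 0)]
  refine ⟨integrable_finsetSum _ fun l _ => integrable_finsetSum _ fun l' _ => hint l l', ?_⟩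
  rw [integral_finsetSum _ fun l _ => integrable_finsetSum _ fun l' _ => hint l l']
  simp_rw [integral_finsetSum _ fun l' _ => hint _ l', hsq, ← sum_div]
  exact div_le_div_of_nonneg_right (sum_colWeight_dotProduct_mulVec_le c V) (Nat.cast_nonneg _)

lemma integral_sum_sq_transpose_mul_sampleCov_sub_le [IsProbabilityMeasure μ]
    {It : ℕ → Ω → ι → ℝ} {Xt : ℕ → Ω → κ → ℝ}
    (hiid : iIndepFun (fun j ω => (It j ω, Xt j ω)) μ)
    (hid : ∀ j, IdentDistrib (fun ω => (It j ω, Xt j ω)) (fun ω => (It 0 ω, Xt 0 ω)) μ μ)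
    (hIt : ∀ j a, MemLp (fun ω => It j ω a) 4 μ) (hXt : ∀ j b, MemLp (fun ω => Xt j ω b) 4 μ)
    (c : Matrix ι κ ℝ) {s : Finset ℕ} (hs : s.Nonempty) :
    Integrable
        (fun ω => ∑ l, ∑ l', ((cᵀ * (sampleCov It Xt s ω - covMat μ (It 0) (Xt 0))) l l') ^ 2) μ ∧
      ∫ ω, ∑ l, ∑ l', ((cᵀ * (sampleCov It Xt s ω - covMat μ (It 0) (Xt 0))) l l') ^ 2 ∂μ
        ≤ Fintype.card κ * opNorm (varMat μ fun ω (p : ι × κ) => It 0 ω p.1 * Xt 0 ω p.2) *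
          (cᵀ * c).trace / #s := by
  have hprod : Measurable fun uv : (ι → ℝ) × (κ → ℝ) => fun p : ι × κ => uv.1 p.1 * uv.2 p.2 := by
    fun_prop
  exact integral_sum_sq_transpose_mul_sampleMean_sub_le
    (Z := fun j ω p => It j ω p.1 * Xt j ω p.2)
    (fun j p => memLp_two_mul_of_memLp_four (hIt j p.1) (hXt j p.2))
    (hiid.comp _ fun _ => hprod) (fun j => (hid j).comp hprod) c hs

end Moments

section BoundedInProbability

def IsBoundedInProbability {Ω : ℕ → Type*} [∀ m, MeasurableSpace (Ω m)]
    (μ : ∀ m, Measure (Ω m)) (R : ∀ m, Ω m → ℝ) : Prop :=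
  ∀ δ > (0 : ℝ), ∃ C' > (0 : ℝ), ∃ M : ℕ, ∀ m ≥ M, μ m {ω | C' < R m ω} < ENNReal.ofReal δ

lemma measure_lt_lt_ofReal_of_sq_le {Ω : Type*} [MeasurableSpace Ω] {μ : Measure Ω}
    [IsFiniteMeasure μ]
    {R g : Ω → ℝ} (hRg : ∀ ω, R ω ^ 2 ≤ g ω) (hg : Integrable g μ) {c δ : ℝ} (hc : 0 < c)
    (hδ : ∫ ω, g ω ∂μ < δ * c ^ 2) : μ {ω | c < R ω} < ENNReal.ofReal δ := by
  have hg0 : 0 ≤ᵐ[μ] g := Eventually.of_forall fun ω => (sq_nonneg _).trans (hRg ω)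
  have hsub : {ω | c < R ω} ⊆ {ω | c ^ 2 ≤ g ω} := fun ω hω =>
    (pow_le_pow_left₀ hc.le (le_of_lt hω) 2).trans (hRg ω)
  have hmarkov : c ^ 2 * μ.real {ω | c < R ω} < c ^ 2 * δ :=
    calc c ^ 2 * μ.real {ω | c < R ω} ≤ c ^ 2 * μ.real {ω | c ^ 2 ≤ g ω} :=
          mul_le_mul_of_nonneg_left (measureReal_mono hsub) (by positivity)
      _ ≤ ∫ ω, g ω ∂μ := mul_meas_ge_le_integral_of_nonneg hg0 hg _
      _ < c ^ 2 * δ := by linarith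
  have hδ0 : 0 < δ := by
    have := integral_nonneg_of_ae hg0
    nlinarith
  rw [← ofReal_measureReal, ENNReal.ofReal_lt_ofReal_iff hδ0]
  exact lt_of_mul_lt_mul_left hmarkov (by positivity)

lemma isBoundedInProbability_of_integral_le {Ω : ℕ → Type*} [∀ m, MeasurableSpace (Ω m)]
    {μ : ∀ m, Measure (Ω m)} [∀ m, IsFiniteMeasure (μ m)] {R g : ∀ m, Ω m → ℝ}
    (hRg : ∀ m ω, R m ω ^ 2 ≤ g m ω) {B : ℝ}
    (hg : ∀ᶠ m in atTop, Integrable (g m) (μ m) ∧ ∫ ω, g m ω ∂μ m ≤ B) :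
    IsBoundedInProbability μ R := by
  intro δ hδ
  obtain ⟨M, hM⟩ := eventually_atTop.mp hg
  refine ⟨|B| / δ + 1, by positivity, M, fun m hm => ?_⟩
  obtain ⟨hint, hle⟩ := hM m hm
  refine measure_lt_lt_ofReal_of_sq_le (hRg m) hint (by positivity) ?_
  have hc : |B| / δ + 1 ≤ (|B| / δ + 1) ^ 2 := by nlinarith [div_nonneg (abs_nonneg B) hδ.le]
  calc ∫ ω, g m ω ∂μ m ≤ |B| := hle.trans (le_abs_self B)
    _ < δ * (|B| / δ + 1) := by rw [mul_add, mul_div_cancel₀ _ hδ.ne']; linarith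
    _ ≤ δ * (|B| / δ + 1) ^ 2 := by gcongr

end BoundedInProbability

lemma eventually_pos_and_div_le_of_tendsto {a : ℕ → ℕ} {r : ℝ} (hr : 0 < r)
    (h : Tendsto (fun m : ℕ => (a m : ℝ) / m) atTop (𝓝 r)) :
    ∀ᶠ m : ℕ in atTop, 0 < a m ∧ (m : ℝ) / a m ≤ 2 / r := by
  filter_upwards [h.eventually (eventually_gt_nhds (half_lt_self hr)), eventually_gt_atTop 0]
    with m hm hm0
  have hm0 : (0 : ℝ) < m := Nat.cast_pos.mpr hm0
  have hlt : r / 2 * m < a m := (lt_div_iff₀ hm0).mp hm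
  have ha : (0 : ℝ) < a m := by nlinarith
  refine ⟨Nat.cast_pos.mp ha, ?_⟩
  rw [div_le_div_iff₀ ha hr]
  linarith

lemma isBoundedInProbability_scaled_sampleCov_error {d : ℕ} {Ω : ℕ → Type*}
    [∀ m, MeasurableSpace (Ω m)] {μ : ∀ m, Measure (Ω m)} [∀ m, IsProbabilityMeasure (μ m)]
    {It : ∀ m, ℕ → Ω m → Fin m → ℝ} {Xt : ∀ m, ℕ → Ω m → Fin d → ℝ}
    (hiid : ∀ m, iIndepFun (fun j ω => (It m j ω, Xt m j ω)) (μ m))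
    (hid : ∀ m j, IdentDistrib (fun ω => (It m j ω, Xt m j ω))
      (fun ω => (It m 0 ω, Xt m 0 ω)) (μ m) (μ m))
    (hIt : ∀ m j a, MemLp (fun ω => It m j ω a) 4 (μ m))
    (hXt : ∀ m j l, MemLp (fun ω => Xt m j ω l) 4 (μ m))
    {C : ℝ} (hV : ∀ m : ℕ, (m : ℝ) * opNorm (varMat (μ m)
        (fun ω (p : Fin m × Fin d) => It m 0 ω p.1 * Xt m 0 ω p.2)) ≤ C)
    {T : ℝ} (hT : ∀ᶠ m : ℕ in atTop, ((m : ℝ) •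
        ((covMat (μ m) (It m 0) (Xt m 0))ᵀ * covMat (μ m) (It m 0) (Xt m 0))).trace ≤ T)
    {s : ℕ → Finset ℕ} {b : ℝ} (hs : ∀ᶠ m : ℕ in atTop, (s m).Nonempty ∧ (m : ℝ) / #(s m) ≤ b) :
    IsBoundedInProbability μ fun m ω => √(m : ℝ) * opNorm
      ((√(m : ℝ) • covMat (μ m) (It m 0) (Xt m 0))ᵀ *
        (√(m : ℝ) • (sampleCov (It m) (Xt m) (s m) ω - covMat (μ m) (It m 0) (Xt m 0)))) := by
  refine isBoundedInProbability_of_integral_le (B := d * b * C * T)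
    (fun m ω => sq_sqrt_mul_opNorm_smul_transpose_mul_smul_le (Nat.cast_nonneg m) _ _) ?_
  filter_upwards [hT, hs] with m hTm ⟨hne, hb⟩
  set c := covMat (μ m) (It m 0) (Xt m 0)
  set v := opNorm (varMat (μ m) fun ω (p : Fin m × Fin d) => It m 0 ω p.1 * Xt m 0 ω p.2)
  obtain ⟨hint, hle⟩ := integral_sum_sq_transpose_mul_sampleCov_sub_le (hiid m) (hid m)
    (hIt m) (hXt m) c hne
  have hv : 0 ≤ (m : ℝ) * v := mul_nonneg m.cast_nonneg (opNorm_nonneg _)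
  have htr : 0 ≤ ((m : ℝ) • (cᵀ * c)).trace := by
    rw [Matrix.trace_smul, smul_eq_mul]
    exact mul_nonneg m.cast_nonneg
      (by simpa using (posSemidef_conjTranspose_mul_self c).trace_nonneg)
  have hb0 : 0 ≤ b := (div_nonneg m.cast_nonneg (Nat.cast_nonneg _)).trans hb
  refine ⟨hint.const_mul _, ?_⟩
  rw [integral_const_mul]
  calc (m : ℝ) ^ 3 * ∫ ω, ∑ l, ∑ l', ((cᵀ * (sampleCov (It m) (Xt m) (s m) ω - c)) l l') ^ 2 ∂μ m
      ≤ (m : ℝ) ^ 3 * (d * v * (cᵀ * c).trace / #(s m)) := by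
        simpa using mul_le_mul_of_nonneg_left hle (by positivity : (0 : ℝ) ≤ (m : ℝ) ^ 3)
    _ = d * ((m : ℝ) / #(s m)) * ((m : ℝ) * v) * ((m : ℝ) • (cᵀ * c)).trace := by
        rw [Matrix.trace_smul, smul_eq_mul]; ring
    _ ≤ d * b * C * T := by
        have hC : 0 ≤ C := hv.trans (hV m)
        gcongr
        exact hV m

theorem stmt_14_general
    (d K : ℕ)
    (Ω : ℕ → Type) [mΩ : ∀ m, MeasurableSpace (Ω m)]
    (μ : ∀ m, Measure (Ω m)) (hprob : ∀ m, IsProbabilityMeasure (μ m))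
    -- for each instrument dimension m, i.i.d. samples of the two systems
    (I : ∀ m, ℕ → Ω m → Fin m → ℝ) (X : ∀ m, ℕ → Ω m → Fin d → ℝ)
    (It : ∀ m, ℕ → Ω m → Fin m → ℝ) (Xt : ∀ m, ℕ → Ω m → Fin d → ℝ)
    -- sample sizes with n/m → r, ñ/m → r̃; ñ is split into K equal folds of size q
    (nt q : ℕ → ℕ) (hfold : ∀ m, nt m = K * q m)
    (rt : ℝ) (hrt : 0 < rt)
    (hrtlim : Tendsto (fun (m : ℕ) => (nt m : ℝ) / m) atTop (𝓝 rt))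
    -- i.i.d. within each sample, independence across samples
    (hiid2 : ∀ m, iIndepFun
      (fun j ω => (It m j ω, Xt m j ω)) (μ m))
    (hid2 : ∀ m j, IdentDistrib (fun ω => (It m j ω, Xt m j ω))
      (fun ω => (It m 0 ω, Xt m 0 ω)) (μ m) (μ m))
    -- bounded fourth moments
    (hIt4 : ∀ m j k, MemLp (fun ω => It m j ω k) 4 (μ m))
    (hXt4 : ∀ m j l, MemLp (fun ω => Xt m j ω l) 4 (μ m))
    -- structural model and Assumption 1
    (hcov : ∀ m, covMat (μ m) (It m 0) (Xt m 0) = covMat (μ m) (I m 0) (X m 0))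
    -- Assumption 4: Q = lim m·Cov(Ĩ,X̃)ᵀCov(Ĩ,X̃) exists and is positive definite
    (Q : Matrix (Fin d) (Fin d) ℝ)
    (hQ : Tendsto
      (fun (m : ℕ) => (m : ℝ) •
        ((covMat (μ m) (It m 0) (Xt m 0))ᵀ * covMat (μ m) (It m 0) (Xt m 0)))
      atTop (𝓝 Q))
    -- Assumption 4: uniform operator-norm bounds
    (C : ℝ)
    (hopIX : ∀ m : ℕ,
      (m : ℝ) * opNorm (varMat (μ m)
        (fun ω (p : Fin m × Fin d) => It m 0 ω p.1 * Xt m 0 ω p.2)) ≤ C)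
    :
    -- conclusion: ‖c̄ᵀE_k‖_op = O_p(m^{-1/2}) for each fold k,
    -- and ‖c̄ᵀE‖_op = O_p(m^{-1/2})
    (∀ k : Fin K, ∀ δ > (0:ℝ), ∃ C' > (0:ℝ), ∃ M : ℕ, ∀ m ≥ M,
      μ m {ω | C' < Real.sqrt (m : ℝ) * opNorm
          ((Real.sqrt (m : ℝ) • covMat (μ m) (I m 0) (X m 0))ᵀ *
            (Real.sqrt (m : ℝ) •
              (foldCovHat (It m) (Xt m) (q m) (k : ℕ) ω
                - covMat (μ m) (I m 0) (X m 0))))}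
        < ENNReal.ofReal δ)
    ∧ (∀ δ > (0:ℝ), ∃ C' > (0:ℝ), ∃ M : ℕ, ∀ m ≥ M,
      μ m {ω | C' < Real.sqrt (m : ℝ) * opNorm
          ((Real.sqrt (m : ℝ) • covMat (μ m) (I m 0) (X m 0))ᵀ *
            (Real.sqrt (m : ℝ) •
              (covHat (It m) (Xt m) (nt m) ω - covMat (μ m) (I m 0) (X m 0))))}
        < ENNReal.ofReal δ) := by
  have := hprob
  simp only [← hcov, foldCovHat_eq_sampleCov, covHat_eq_sampleCov]
  have hT := ((continuous_id.matrix_trace.tendsto Q).comp hQ).eventually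
    (eventually_le_nhds (lt_add_one Q.trace))
  have hnt := eventually_pos_and_div_le_of_tendsto hrt hrtlim
  constructor
  · intro k
    refine isBoundedInProbability_scaled_sampleCov_error hiid2 hid2 hIt4 hXt4 hopIX hT
      (b := K * (2 / rt)) ?_
    filter_upwards [hnt] with m ⟨hpos, hle⟩
    have hK : (0 : ℝ) < K := Nat.cast_pos.mpr (Nat.pos_of_mul_pos_right (hfold m ▸ hpos))
    have hcard : #(Ico (k * q m) ((k + 1) * q m)) = q m := by simp [add_mul]
    have hq : 0 < q m := Nat.pos_of_mul_pos_left (hfold m ▸ hpos)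
    refine ⟨card_pos.mp (by rw [hcard]; exact hq), ?_⟩
    calc (m : ℝ) / #(Ico (k * q m) ((k + 1) * q m)) = K * ((m : ℝ) / nt m) := by
          rw [hcard, hfold m, Nat.cast_mul]
          field_simp
      _ ≤ K * (2 / rt) := by gcongr
  · exact isBoundedInProbability_scaled_sampleCov_error hiid2 hid2 hIt4 hXt4 hopIX hT
      (hnt.mono fun m h => ⟨nonempty_range_iff.mpr h.1.ne', by simpa using h.2⟩)

/-- Scaled error rates, part (i): under Assumption 4, writing
`c̄ = √m Cov(I,X)`, `E_k = √m(Ĉov_k(Ĩ,X̃) − Cov(I,X))` and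
`E = √m(Ĉov(Ĩ,X̃) − Cov(I,X))`, for each fixed fold `k`,
`‖c̄ᵀE_k‖_op = O_p(m^{-1/2})` and `‖c̄ᵀE‖_op = O_p(m^{-1/2})`. -/
theorem stmt_14
    (d K : ℕ) (hK : 2 ≤ K) (βstar : Fin d → ℝ)
    (Ω : ℕ → Type) [mΩ : ∀ m, MeasurableSpace (Ω m)]
    (μ : ∀ m, Measure (Ω m)) (hprob : ∀ m, IsProbabilityMeasure (μ m))
    -- for each instrument dimension m, i.i.d. samples of the two systems
    (I : ∀ m, ℕ → Ω m → Fin m → ℝ) (X : ∀ m, ℕ → Ω m → Fin d → ℝ)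
    (Y : ∀ m, ℕ → Ω m → ℝ) (ε : ∀ m, ℕ → Ω m → ℝ)
    (It : ∀ m, ℕ → Ω m → Fin m → ℝ) (Xt : ∀ m, ℕ → Ω m → Fin d → ℝ)
    -- sample sizes with n/m → r, ñ/m → r̃; ñ is split into K equal folds of size q
    (n nt q : ℕ → ℕ) (hfold : ∀ m, nt m = K * q m)
    (r rt : ℝ) (hr : 0 < r) (hrt : 0 < rt)
    (hrlim : Tendsto (fun (m : ℕ) => (n m : ℝ) / m) atTop (𝓝 r))
    (hrtlim : Tendsto (fun (m : ℕ) => (nt m : ℝ) / m) atTop (𝓝 rt))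
    -- measurability
    (hmeas : ∀ m i, Measurable fun ω => (I m i ω, X m i ω, Y m i ω))
    (hmeast : ∀ m j, Measurable fun ω => (It m j ω, Xt m j ω))
    -- i.i.d. within each sample, independence across samples
    (hiid1 : ∀ m, iIndepFun
      (fun i ω => (I m i ω, X m i ω, Y m i ω)) (μ m))
    (hid1 : ∀ m i, IdentDistrib (fun ω => (I m i ω, X m i ω, Y m i ω))
      (fun ω => (I m 0 ω, X m 0 ω, Y m 0 ω)) (μ m) (μ m))
    (hiid2 : ∀ m, iIndepFun
      (fun j ω => (It m j ω, Xt m j ω)) (μ m))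
    (hid2 : ∀ m j, IdentDistrib (fun ω => (It m j ω, Xt m j ω))
      (fun ω => (It m 0 ω, Xt m 0 ω)) (μ m) (μ m))
    (hindep : ∀ m, IndepFun (fun ω (i : ℕ) => (I m i ω, X m i ω, Y m i ω))
      (fun ω (j : ℕ) => (It m j ω, Xt m j ω)) (μ m))
    -- bounded fourth moments
    (hI4 : ∀ m i k, MemLp (fun ω => I m i ω k) 4 (μ m))
    (hX4 : ∀ m i l, MemLp (fun ω => X m i ω l) 4 (μ m))
    (hY4 : ∀ m i, MemLp (Y m i) 4 (μ m))
    (hIt4 : ∀ m j k, MemLp (fun ω => It m j ω k) 4 (μ m))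
    (hXt4 : ∀ m j l, MemLp (fun ω => Xt m j ω l) 4 (μ m))
    -- all variables are centered
    (hIc : ∀ m i k, ∫ ω, I m i ω k ∂(μ m) = 0)
    (hXc : ∀ m i l, ∫ ω, X m i ω l ∂(μ m) = 0)
    (hYc : ∀ m i, ∫ ω, Y m i ω ∂(μ m) = 0)
    (hItc : ∀ m j k, ∫ ω, It m j ω k ∂(μ m) = 0)
    (hXtc : ∀ m j l, ∫ ω, Xt m j ω l ∂(μ m) = 0)
    -- structural model and Assumption 1
    (hmodel : ∀ m i ω, Y m i ω = (∑ l, X m i ω l * βstar l) + ε m i ω)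
    (hexo : ∀ m i,
      (μ m)[ε m i | MeasurableSpace.comap (I m i) inferInstance] =ᵐ[μ m] 0)
    (hcov : ∀ m, covMat (μ m) (It m 0) (Xt m 0) = covMat (μ m) (I m 0) (X m 0))
    -- Assumption 4: Q = lim m·Cov(Ĩ,X̃)ᵀCov(Ĩ,X̃) exists and is positive definite
    (Q : Matrix (Fin d) (Fin d) ℝ) (hQpd : Q.PosDef)
    (hQ : Tendsto
      (fun (m : ℕ) => (m : ℝ) •
        ((covMat (μ m) (It m 0) (Xt m 0))ᵀ * covMat (μ m) (It m 0) (Xt m 0)))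
      atTop (𝓝 Q))
    -- Assumption 4: uniform operator-norm bounds
    (C : ℝ)
    (hopIX : ∀ m : ℕ,
      (m : ℝ) * opNorm (varMat (μ m)
        (fun ω (p : Fin m × Fin d) => It m 0 ω p.1 * Xt m 0 ω p.2)) ≤ C)
    (hopIY : ∀ m : ℕ,
      (m : ℝ) * opNorm (varMat (μ m) (fun ω k => I m 0 ω k * Y m 0 ω)) ≤ C)
    :
    -- conclusion: ‖c̄ᵀE_k‖_op = O_p(m^{-1/2}) for each fold k,
    -- and ‖c̄ᵀE‖_op = O_p(m^{-1/2})
    (∀ k : Fin K, ∀ δ > (0:ℝ), ∃ C' > (0:ℝ), ∃ M : ℕ, ∀ m ≥ M,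
      μ m {ω | C' < Real.sqrt (m : ℝ) * opNorm
          ((Real.sqrt (m : ℝ) • covMat (μ m) (I m 0) (X m 0))ᵀ *
            (Real.sqrt (m : ℝ) •
              (foldCovHat (It m) (Xt m) (q m) (k : ℕ) ω
                - covMat (μ m) (I m 0) (X m 0))))}
        < ENNReal.ofReal δ)
    ∧ (∀ δ > (0:ℝ), ∃ C' > (0:ℝ), ∃ M : ℕ, ∀ m ≥ M,
      μ m {ω | C' < Real.sqrt (m : ℝ) * opNorm
          ((Real.sqrt (m : ℝ) • covMat (μ m) (I m 0) (X m 0))ᵀ *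
            (Real.sqrt (m : ℝ) •
              (covHat (It m) (Xt m) (nt m) ω - covMat (μ m) (I m 0) (X m 0))))}
        < ENNReal.ofReal δ) :=
  stmt_14_general d K Ω (mΩ := mΩ) μ hprob I X It Xt nt q hfold rt hrt hrtlim hiid2 hid2 hIt4 hXt4
    hcov Q hQ C hopIX
end
end

section
/- (Equivalence of two-sample IV estimators for balanced categorical instruments.) Suppose I is one-hot encoded over m categories with P(I = e_k) = P(Ĩ = e_k) = 1/m for all k, and the empirical category shares are exactly matched and balanced: n_k/n = ñ_k/ñ = 1/m for every category k, where n_k and ñ_k count observations in category k in the (I,Y)- and (Ĩ,X̃)-samples respectively. Let Ȳ_k := (1/n_k)Σ_{i:I_i=e_k} Y_i and X̄_k := (1/ñ_k)Σ_{j:Ĩ_j=e_k} X̃_j. Then the identity-weighted unpaired GMM estimator β̂_GMM(Id) := argmin_β ĝ_N(β)ᵀ ĝ_N(β), with ĝ_N(β) := (1/n)Σ_i I_i Y_i − ((1/ñ)Σ_j Ĩ_j X̃_jᵀ)β, equals the ordinary least squares estimator on the category means: β̂_GMM(Id) = (Σ_{k=1}^m X̄_k X̄_kᵀ)⁻¹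 (Σ_{k=1}^m X̄_k Ȳ_k), provided Σ_k X̄_k X̄_kᵀ is invertible. -/
open MeasureTheory ProbabilityTheory Filter Matrix
open scoped Topology NNReal ENNReal

noncomputable section

/-- Sample moment for one-hot (categorical) instruments:
`ĝ(β)_k = (1/n) Σ_i 1{c_i = k} Y_i − (1/ñ) Σ_j 1{c̃_j = k} X̃_jᵀ β`. -/
def ghatCat {n nt m d : ℕ} (c : Fin n → Fin m) (Y : Fin n → ℝ)
    (ct : Fin nt → Fin m) (Xt : Fin nt → Fin d → ℝ) (b : Fin d → ℝ) :
    Fin m → ℝ :=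
  fun k => (n : ℝ)⁻¹ * (∑ i, (if c i = k then (1:ℝ) else 0) * Y i)
    - (nt : ℝ)⁻¹ * ∑ j, (if ct j = k then (1:ℝ) else 0) * (∑ l, Xt j l * b l)

/-- Equivalence of two-sample IV estimators for balanced
categorical (one-hot) instruments: if the empirical category shares are exactly
matched and balanced (`n_k/n = ñ_k/ñ = 1/m`), then any minimizer of the
identity-weighted unpaired GMM objective `ĝ_N(β)ᵀ ĝ_N(β)` equals the OLS
estimator on the category means, provided `Σ_k X̄_k X̄_kᵀ` is invertible. -/
theorem stmt_19
    (n nt m d : ℕ) (hn : 0 < n) (hnt : 0 < nt) (hm : 0 < m)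
    -- one-hot encoded categorical instruments, given by category labels
    (c : Fin n → Fin m) (Y : Fin n → ℝ)
    (ct : Fin nt → Fin m) (Xt : Fin nt → Fin d → ℝ)
    -- balanced and matched empirical shares: n_k/n = ñ_k/ñ = 1/m
    (hbal : ∀ k, (Finset.univ.filter fun i => c i = k).card * m = n)
    (hbalt : ∀ k, (Finset.univ.filter fun j => ct j = k).card * m = nt)
    -- within-category sample means
    (Ybar : Fin m → ℝ) (Xbar : Fin m → Fin d → ℝ)
    (hYbar : ∀ k, Ybar k =
      ((Finset.univ.filter fun i => c i = k).card : ℝ)⁻¹ *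
        ∑ i ∈ Finset.univ.filter fun i => c i = k, Y i)
    (hXbar : ∀ k l, Xbar k l =
      ((Finset.univ.filter fun j => ct j = k).card : ℝ)⁻¹ *
        ∑ j ∈ Finset.univ.filter fun j => ct j = k, Xt j l)
    -- invertibility of the Gram matrix of the category means
    (hGram : IsUnit (Matrix.of fun l l' => ∑ k, Xbar k l * Xbar k l' :
      Matrix (Fin d) (Fin d) ℝ).det
    )
    -- the identity-weighted unpaired GMM estimator: any minimizer of ĝᵀĝ
    (bhat : Fin d → ℝ)
    (hargmin : ∀ b : Fin d → ℝ,
      ghatCat c Y ct Xt bhat ⬝ᵥ ghatCat c Y ct Xt bhat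
        ≤ ghatCat c Y ct Xt b ⬝ᵥ ghatCat c Y ct Xt b) :
    -- conclusion: β̂_GMM(Id) equals OLS on the category means
    bhat = (Matrix.of fun l l' => ∑ k, Xbar k l * Xbar k l' :
        Matrix (Fin d) (Fin d) ℝ)⁻¹ *ᵥ (∑ k, Ybar k • Xbar k) := by
  set G : Matrix (Fin d) (Fin d) ℝ :=
    (Matrix.of fun l l' => ∑ k, Xbar k l * Xbar k l') with hGdef
  set v : Fin d → ℝ := ∑ k, Ybar k • Xbar k with hvdef
  set bstar : Fin d → ℝ := G⁻¹ *ᵥ v with hbstar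
  have hGb : G *ᵥ bstar = v := by
    rw [hbstar, Matrix.mulVec_mulVec, Matrix.mul_nonsing_inv _ hGram, Matrix.one_mulVec]
  have hm' : ((m : ℕ) : ℝ) ≠ 0 := Nat.cast_ne_zero.mpr hm.ne'
  -- simplify ghat
  have hghat : ∀ b k, ghatCat c Y ct Xt b k
      = (m : ℝ)⁻¹ * (Ybar k - ∑ l, Xbar k l * b l) := by
    intro b k
    have h1 : (n : ℝ) = ((Finset.univ.filter fun i => c i = k).card : ℝ) * m := by
      exact_mod_cast (hbal k).symm
    have h2 : (nt : ℝ) = ((Finset.univ.filter fun j => ct j = k).card : ℝ) * m := by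
      exact_mod_cast (hbalt k).symm
    have e1 : (∑ i, (if c i = k then (1:ℝ) else 0) * Y i)
        = ∑ i ∈ Finset.univ.filter fun i => c i = k, Y i := by
      rw [Finset.sum_filter]
      exact Finset.sum_congr rfl fun i _ => by by_cases h : c i = k <;> simp [h]
    have e2 : (∑ j, (if ct j = k then (1:ℝ) else 0) * (∑ l, Xt j l * b l))
        = ∑ l, (∑ j ∈ Finset.univ.filter fun j => ct j = k, Xt j l) * b l := by
      have h3 : (∑ j, (if ct j = k then (1:ℝ) else 0) * (∑ l, Xt j l * b l))
          = ∑ j ∈ Finset.univ.filter fun j => ct j = k, ∑ l, Xt j l * b l := by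
        rw [Finset.sum_filter]
        exact Finset.sum_congr rfl fun j _ => by by_cases h : ct j = k <;> simp [h]
      rw [h3, Finset.sum_comm]
      exact Finset.sum_congr rfl fun l _ => (Finset.sum_mul _ _ _).symm
    rw [ghatCat, e1, e2, h1, h2, hYbar k]
    have e3 : ∀ l, Xbar k l * b l
        = ((Finset.univ.filter fun j => ct j = k).card : ℝ)⁻¹ *
          ((∑ j ∈ Finset.univ.filter fun j => ct j = k, Xt j l) * b l) := by
      intro l; rw [hXbar k l]; ring
    simp only [e3, ← Finset.mul_sum, mul_inv]
    ring
  -- quadratic objective in terms of residuals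
  set r : (Fin d → ℝ) → Fin m → ℝ := fun b k => Ybar k - ∑ l, Xbar k l * b l with hr
  set f : (Fin d → ℝ) → ℝ := fun b => ∑ k, (r b k) ^ 2 with hf
  have hobj : ∀ b, ghatCat c Y ct Xt b ⬝ᵥ ghatCat c Y ct Xt b
      = ((m:ℝ)⁻¹)^2 * f b := by
    intro b
    simp only [dotProduct, hghat, hf, Finset.mul_sum]
    exact Finset.sum_congr rfl fun k _ => by ring
  have hfmin : ∀ b, f bhat ≤ f b := by
    intro b
    have h := hargmin b
    rw [hobj, hobj] at h
    have hpos : (0:ℝ) < ((m:ℝ)⁻¹)^2 := by positivity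
    exact le_of_mul_le_mul_left h hpos
  set δ : Fin d → ℝ := fun l => bhat l - bstar l with hδ
  -- normal equations at bstar
  have hveq : ∀ l, ∑ k, Ybar k * Xbar k l
      = ∑ k, (∑ l', Xbar k l' * bstar l') * Xbar k l := by
    intro l
    have h := congrFun hGb l
    simp only [Matrix.mulVec, dotProduct, hGdef, Matrix.of_apply, hvdef,
      Finset.sum_apply, Pi.smul_apply, smul_eq_mul] at h
    calc ∑ k, Ybar k * Xbar k l = ∑ l', (∑ k, Xbar k l * Xbar k l') * bstar l' := h.symm
      _ = ∑ k, (∑ l', Xbar k l' * bstar l') * Xbar k l := by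
          simp only [Finset.sum_mul]
          rw [Finset.sum_comm]
          exact Finset.sum_congr rfl fun k _ =>
            Finset.sum_congr rfl fun l' _ => by ring
  -- cross term vanishes at bstar
  have hcross : ∑ k, r bstar k * (∑ l, Xbar k l * δ l) = 0 := by
    have step1 : ∑ k, r bstar k * (∑ l, Xbar k l * δ l)
        = ∑ l, δ l * ((∑ k, Ybar k * Xbar k l)
            - ∑ k, (∑ l', Xbar k l' * bstar l') * Xbar k l) := by
      simp only [hr, Finset.mul_sum]
      rw [Finset.sum_comm]
      refine Finset.sum_congr rfl fun l _ => ?_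
      rw [mul_sub, Finset.mul_sum, Finset.mul_sum, ← Finset.sum_sub_distrib]
      exact Finset.sum_congr rfl fun k _ => by ring
    rw [step1]
    refine Finset.sum_eq_zero fun l _ => ?_
    rw [hveq l, sub_self, mul_zero]
  -- expansion
  have hexp : f bhat = f bstar + ∑ k, (∑ l, Xbar k l * δ l) ^ 2 := by
    have hrk : ∀ k, r bhat k = r bstar k - ∑ l, Xbar k l * δ l := by
      intro k
      simp only [hr, hδ, mul_sub, Finset.sum_sub_distrib]
      ring
    have h : f bhat = ∑ k, ((r bstar k)^2 - 2 * (r bstar k * (∑ l, Xbar k l * δ l))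
        + (∑ l, Xbar k l * δ l)^2) := by
      simp only [hf]
      exact Finset.sum_congr rfl fun k _ => by rw [hrk k]; ring
    rw [h, Finset.sum_add_distrib, Finset.sum_sub_distrib, ← Finset.mul_sum, hcross]
    simp [hf]
  -- each projected residual is zero
  have hsqz : ∑ k, (∑ l, Xbar k l * δ l) ^ 2 = 0 := by
    have h1 := hfmin bstar
    have h2 : ∑ k, (∑ l, Xbar k l * δ l) ^ 2 ≤ 0 := by linarith [hexp]
    have h3 : 0 ≤ ∑ k, (∑ l, Xbar k l * δ l) ^ 2 :=
      Finset.sum_nonneg fun k _ => sq_nonneg _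
    linarith
  have hzero : ∀ k, (∑ l, Xbar k l * δ l) = 0 := by
    intro k
    have h := (Finset.sum_eq_zero_iff_of_nonneg
      (fun k _ => sq_nonneg (∑ l, Xbar k l * δ l))).mp hsqz k (Finset.mem_univ k)
    exact pow_eq_zero_iff (two_ne_zero) |>.mp h
  have hGδ : G *ᵥ δ = 0 := by
    funext l
    simp only [Matrix.mulVec, dotProduct, hGdef, Matrix.of_apply, Pi.zero_apply]
    calc ∑ l', (∑ k, Xbar k l * Xbar k l') * δ l'
        = ∑ k, Xbar k l * (∑ l', Xbar k l' * δ l') := by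
          simp only [Finset.sum_mul, Finset.mul_sum]
          rw [Finset.sum_comm]
          exact Finset.sum_congr rfl fun k _ =>
            Finset.sum_congr rfl fun l' _ => by ring
      _ = 0 := by simp [hzero]
  have hδ0 : δ = 0 := by
    have h1 : G⁻¹ *ᵥ (G *ᵥ δ) = δ := by
      rw [Matrix.mulVec_mulVec, Matrix.nonsing_inv_mul _ hGram, Matrix.one_mulVec]
    rw [hGδ, Matrix.mulVec_zero] at h1
    exact h1.symm
  funext l
  have h := congrFun hδ0 l
  simp only [hδ, Pi.zero_apply] at h
  linarith
end
end
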